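/- arXiv:2603.23456 — 9 statements merged into one kernel-verified Lean document; each statement's English description precedes it below -/
import Mathlib

section
/- Every multiplicative eventually periodic function χ : ℕ → K over a field K of characteristic 0 is either periodic or eventually zero. -/
theorem my_decomp (d : ℕ) : ∀ k : ℕ, 1 ≤ k → ∃ a b : ℕ, k = a * b ∧ 1 ≤ b ∧
    Nat.Coprime b d ∧ ∀ x, Nat.Coprime x d → Nat.Coprime a x := by
  intro k
  induction k using Nat.strong_induction_on with
  | _ k ih =>
    intro hk
    by_cases h : Nat.Coprime k d
    · exact ⟨1, k, (one_mul k).symm, hk, h, fun x _ => Nat.coprime_one_left x⟩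
    · obtain ⟨p, pp, hpdvd⟩ := Nat.exists_prime_and_dvd (n := Nat.gcd k d) (fun h1 => h h1)
      have hpk : p ∣ k := hpdvd.trans (Nat.gcd_dvd_left _ _)
      have hpd : p ∣ d := hpdvd.trans (Nat.gcd_dvd_right _ _)
      obtain ⟨k', rfl⟩ := hpk
      have hk' : 1 ≤ k' := by
        rcases Nat.eq_zero_or_pos k' with h0 | h1
        · subst h0; simp at hk
        · exact h1
      have hlt : k' < p * k' := by
        have := pp.two_le
        calc k' = 1 * k' := (one_mul k').symm
        _ < p * k' := (Nat.mul_lt_mul_right hk').mpr (by omega)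
      obtain ⟨a, b, hab, hb, hbd, ha⟩ := ih k' hlt hk'
      refine ⟨p * a, b, by rw [hab]; ring, hb, hbd, ?_⟩
      intro x hx
      have h1 : Nat.Coprime p x := ((Nat.Coprime.coprime_dvd_right hpd hx)).symm
      exact Nat.Coprime.mul h1 (ha x hx)

/-- Every multiplicative eventually periodic function `χ : ℕ → K`
over a field `K` of characteristic 0 is either periodic or eventually zero. -/
theorem mult_eventually_periodic_is_periodic_or_eventually_zero
    (K : Type*) [Field K] [CharZero K] (χ : ℕ → K)
    (hmult : ∀ m n : ℕ, m ≠ 0 → n ≠ 0 → Nat.Coprime m n → χ (m * n) = χ m * χ n)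
    (hper : ∃ N d : ℕ, 1 ≤ N ∧ 1 ≤ d ∧ ∀ n, N ≤ n → χ (n + d) = χ n) :
    (∃ d : ℕ, 1 ≤ d ∧ ∀ n, 1 ≤ n → χ (n + d) = χ n) ∨
    (∃ N : ℕ, ∀ n, N ≤ n → χ n = 0) := by
  obtain ⟨N, d, hN, hd, hP⟩ := hper
  by_cases hz : ∃ N' : ℕ, ∀ n, N' ≤ n → χ n = 0
  · exact Or.inr hz
  left
  push_neg at hz
  -- periodicity for multiples of d
  have hper' : ∀ t m, N ≤ m → χ (m + t * d) = χ m := by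
    intro t
    induction t with
    | zero => simp
    | succ t ih =>
      intro m hm
      have h1 : m + (t + 1) * d = (m + t * d) + d := by ring
      rw [h1, hP (m + t * d) (le_trans hm (Nat.le_add_right _ _)), ih m hm]
  -- get k ≥ N with χ k ≠ 0
  obtain ⟨k, hkN, hk0⟩ := hz N
  have hk1 : 1 ≤ k := le_trans hN hkN
  -- decompose k = a * b
  obtain ⟨a, b, hab, hb1, hbd, ha⟩ := my_decomp d k hk1
  have ha1 : 1 ≤ a := by
    rcases Nat.eq_zero_or_pos a with h0 | h1
    · subst h0; simp [hab] at hk1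
    · exact h1
  -- χ (b + j*d) ≠ 0 for all j
  have key : ∀ j : ℕ, χ (b + j * d) ≠ 0 := by
    intro j
    have hcop : Nat.Coprime a (b + j * d) :=
      ha _ ((Nat.coprime_add_mul_right_left b d j).mpr hbd)
    have heq : a * (b + j * d) = k + (a * j) * d := by rw [hab]; ring
    have h2 : χ (a * (b + j * d)) = χ k := by rw [heq, hper' (a * j) k hkN]
    have h3 : χ a * χ (b + j * d) = χ k := by
      rw [← hmult a (b + j * d) (by omega) (by omega) hcop, h2]
    intro h0
    rw [h0, mul_zero] at h3
    exact hk0 h3.symm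
  -- κ0 : ≥ N, coprime to d, χ ≠ 0
  set κ0 : ℕ := b + N * d with hκ0def
  have hκ0N : N ≤ κ0 := by
    have : N * 1 ≤ N * d := Nat.mul_le_mul_left N hd
    omega
  have hκ00 : χ κ0 ≠ 0 := key N
  have hκ0d : Nat.Coprime κ0 d := (Nat.coprime_add_mul_right_left b d N).mpr hbd
  refine ⟨d, hd, ?_⟩
  intro n hn
  -- decompose M = n * (n + d)
  have hM1 : 1 ≤ n * (n + d) := Nat.mul_pos hn (by omega)
  obtain ⟨u, v, hM, hv1, hvd, hu⟩ := my_decomp d (n * (n + d)) hM1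
  haveI : NeZero v := ⟨by omega⟩
  -- find j with κ0 + j * d ≡ 1 mod v
  have hdu : IsUnit ((d : ZMod v)) := (ZMod.isUnit_iff_coprime d v).mpr hvd.symm
  obtain ⟨w, hw⟩ := hdu
  set j : ℕ := (((1 : ZMod v) - (κ0 : ZMod v)) * (↑w⁻¹ : ZMod v)).val with hjdef
  set κ : ℕ := κ0 + j * d with hκdef
  have hκv : ((κ : ZMod v)) = 1 := by
    have hjc : ((j : ZMod v)) = ((1 : ZMod v) - (κ0 : ZMod v)) * (↑w⁻¹ : ZMod v) := by
      rw [hjdef, ZMod.natCast_val, ZMod.cast_id]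
    push_cast [hκdef]
    rw [hjc, mul_assoc, mul_comm (↑w⁻¹ : ZMod v) (d : ZMod v), ← hw]
    rw [Units.mul_inv, mul_one]
    ring
  have hκvc : Nat.Coprime κ v := by
    rw [← ZMod.isUnit_iff_coprime, hκv]; exact isUnit_one
  have hκd : Nat.Coprime κ d := by
    rw [hκdef]
    exact (Nat.coprime_add_mul_right_left κ0 d j).mpr hκ0d
  have hκu : Nat.Coprime κ u := (hu κ hκd).symm
  have hκM : Nat.Coprime κ (n * (n + d)) := by
    rw [hM]; exact Nat.Coprime.mul_right hκu hκvc
  have hκn : Nat.Coprime κ n := Nat.Coprime.coprime_dvd_right ⟨n + d, rfl⟩ hκM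
  have hκnd : Nat.Coprime κ (n + d) :=
    Nat.Coprime.coprime_dvd_right ⟨n, mul_comm n (n + d)⟩ hκM
  have hκN : N ≤ κ := le_trans hκ0N (Nat.le_add_right _ _)
  have hκ0' : χ κ ≠ 0 := by
    rw [hκdef, hper' j κ0 hκ0N]; exact hκ00
  have hκpos : 1 ≤ κ := le_trans hN hκN
  -- main computation
  have hnκN : N ≤ n * κ := le_trans hκN (Nat.le_mul_of_pos_left κ hn)
  have e1 : χ (n * κ) = χ n * χ κ := hmult n κ (by omega) (by omega) hκn.symm
  have e2 : χ ((n + d) * κ) = χ (n + d) * χ κ :=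
    hmult (n + d) κ (by omega) (by omega) hκnd.symm
  have e3 : (n + d) * κ = n * κ + κ * d := by ring
  have e4 : χ ((n + d) * κ) = χ (n * κ) := by rw [e3, hper' κ (n * κ) hnκN]
  have e5 : χ (n + d) * χ κ = χ n * χ κ := by rw [← e1, ← e2, e4]
  exact mul_right_cancel₀ hκ0' e5
end

section
/- If L is a field and S is a finitely generated subsemigroup of the multiplicative semigroup (L, ·), then there exists an injective semigroup homomorphism φ : S → (ℂ, ·). -/
/-!
The nonzero elements of `S` lie in the subgroup `G` of `Lˣ` generated by the nonzero
generators, and `0` can be sent to `0`, so it suffices to embed `G` into `ℂˣ`. By the structure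
theorem `G ≅ ℤⁿ × T` with `T` finite, and `T` is cyclic, being a finite subgroup of the units of
a field. As `ℝ` has infinite dimension over `ℚ`, there is an embedding `a : ℤⁿ → (ℝ, +)`, and `T`
embeds into the unit circle by some `b`; then `(x, t) ↦ exp (a x) · b t` is injective by
uniqueness of the polar decomposition in `ℂˣ`.
-/

open Complex

theorem exists_injective_finsupp_int_real (n : ℕ) :
    ∃ f : (Fin n →₀ ℤ) →+ ℝ, Function.Injective f := by
  obtain ⟨v, hv⟩ := exists_linearIndependent_of_le_rank (R := ℚ) (M := ℝ) (n := n)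
    (Real.rank_rat_real ▸ (Cardinal.nat_lt_continuum n).le)
  exact ⟨(Finsupp.linearCombination ℤ v).toAddMonoidHom, hv.restrict_scalars' ℤ⟩

theorem isAddCyclic_of_injective_units {T R : Type*} [AddCommGroup T] [Finite T] [CommRing R]
    [IsDomain R] (f : T →+ Additive Rˣ) (hf : Function.Injective f) : IsAddCyclic T :=
  isCyclic_multiplicative_iff.mp <| isCyclic_of_injective_ringHom
    ((Units.coeHom R).comp (AddMonoidHom.toMultiplicativeLeft f)) (Units.val_injective.comp hf)

theorem exists_injective_circle_of_isAddCyclic (T : Type*) [AddCommGroup T] [Finite T]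
    [h : IsAddCyclic T] : ∃ f : T →+ Additive Circle, Function.Injective f := by
  have : NeZero (Nat.card T) := ⟨Nat.card_pos.ne'⟩
  let e := zmodAddCyclicAddEquiv h
  exact ⟨ZMod.toCircle.toAddMonoidHom.comp e.symm.toAddMonoidHom,
    ZMod.injective_toCircle.comp e.symm.injective⟩

noncomputable def Complex.expMulCircle : ℝ × Additive Circle →+ Additive ℂˣ :=
  AddMonoidHom.mk' (fun p => .ofMul (Units.mk0 (exp p.1 * (p.2.toMul : ℂ))
    (mul_ne_zero (exp_ne_zero _) (Circle.coe_ne_zero _)))) fun p q => by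
    apply Additive.toMul.injective
    ext
    simp [exp_add]
    ring

theorem Complex.expMulCircle_injective : Function.Injective expMulCircle := by
  rw [injective_iff_map_eq_zero]
  rintro ⟨r, z⟩ h
  have h1 : exp r * (z.toMul : ℂ) = 1 := congrArg Units.val (congrArg Additive.toMul h)
  have hr : r = 0 := by
    simpa [Circle.norm_coe, Complex.norm_exp] using congrArg norm h1
  subst hr
  rw [ofReal_zero, exp_zero, one_mul] at h1
  exact Prod.ext rfl (Additive.toMul.injective (Circle.ext h1))

theorem exists_injective_monoidHom_units_complex {G R : Type*} [CommGroup G] [Group.FG G]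
    [CommRing R] [IsDomain R] (u : G →* Rˣ) (hu : Function.Injective u) :
    ∃ ψ : G →* ℂˣ, Function.Injective ψ := by
  obtain ⟨n, ι, _, p, hp, e, ⟨f⟩⟩ := AddCommGroup.equiv_free_prod_directSum_zmod (Additive G)
  have : ∀ i, NeZero (p i ^ e i) := fun i => ⟨pow_ne_zero _ (hp i).ne_zero⟩
  let T := DirectSum ι fun i => ZMod (p i ^ e i)
  have : Finite T := .of_equiv _ DFinsupp.equivFunOnFintype.symm
  have : IsAddCyclic T :=
    isAddCyclic_of_injective_units ((MonoidHom.toAdditive u).comp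
      (f.symm.toAddMonoidHom.comp (AddMonoidHom.inr _ _)))
      (hu.comp (f.symm.injective.comp (Prod.mk_right_injective 0)))
  obtain ⟨a, ha⟩ := exists_injective_finsupp_int_real n
  obtain ⟨b, hb⟩ := exists_injective_circle_of_isAddCyclic T
  exact ⟨MonoidHom.toAdditive.symm (expMulCircle.comp ((a.prodMap b).comp f.toAddMonoidHom)),
    expMulCircle_injective.comp ((Prod.map_injective.mpr ⟨ha, hb⟩).comp f.injective)⟩

theorem Subsemigroup.exists_injective_mulHom_of_le_srange {M N P : Type*} [Mul M] [Mul N]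
    [Mul P]
    {j : M →ₙ* N} (hj : Function.Injective j) {k : M →ₙ* P} (hk : Function.Injective k)
    {S : Subsemigroup N} (hS : S ≤ j.srange) : ∃ φ : S →ₙ* P, Function.Injective φ :=
  let e : M ≃* j.srange := MulEquiv.ofBijective j.srangeRestrict
    ⟨fun _ _ h => hj (congrArg Subtype.val h), j.srangeRestrict_surjective⟩
  ⟨k.comp (e.symm.toMulHom.comp (Subsemigroup.inclusion hS)),
    hk.comp (e.symm.injective.comp (Set.inclusion_injective hS))⟩

/-- If `L` is a field and `S` is a finitely generated subsemigroup of
the multiplicative semigroup `(L, ·)`, then there is an injective semigroup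
homomorphism `φ : S → (ℂ, ·)`. -/
theorem fg_mul_subsemigroup_embeds_into_complex
    (L : Type*) [Field L] (S : Subsemigroup L)
    (hfg : ∃ s : Finset L, S = Subsemigroup.closure (s : Set L)) :
    ∃ φ : S →ₙ* ℂ, Function.Injective φ := by
  classical
  obtain ⟨s, rfl⟩ := hfg
  let U : Set Lˣ := Units.val ⁻¹' s
  have : Finite U := (s.finite_toSet.preimage Units.val_injective.injOn).to_subtype
  let G := Subgroup.closure U
  obtain ⟨ψ, hψ⟩ := exists_injective_monoidHom_units_complex G.subtype G.subtype_injective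
  let j : WithZero G →* L :=
    WithZero.withZeroUnitsEquiv.toMonoidHom.comp (WithZero.map' G.subtype)
  let k : WithZero G →* ℂ := WithZero.withZeroUnitsEquiv.toMonoidHom.comp (WithZero.map' ψ)
  refine Subsemigroup.exists_injective_mulHom_of_le_srange (j := j.toMulHom) (k := k.toMulHom)
    (WithZero.withZeroUnitsEquiv.injective.comp (WithZero.map'_injective G.subtype_injective))
    (WithZero.withZeroUnitsEquiv.injective.comp (WithZero.map'_injective hψ)) ?_
  refine Subsemigroup.closure_le.mpr fun x hx => ?_
  by_cases hx0 : x = 0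
  · exact ⟨0, by simp [j, hx0]⟩
  · exact ⟨(⟨Units.mk0 x hx0, Subgroup.subset_closure hx⟩ : G), by simp [j]⟩
end

section
/- Fix an integer a ≥ 1. A sequence f : ℕ → K with values in a field K is a linear recurrence sequence if and only if for every r with 0 ≤ r ≤ a − 1 the sequence n ↦ f(an + r) is a linear recurrence sequence. -/
/-- `f : ℕ → K` is a linear recurrence sequence. -/
def IsLRS {K : Type*} [Field K] (f : ℕ → K) : Prop :=
  ∃ (d : ℕ) (c : Fin d → K), ∀ n, d ≤ n → f n = ∑ i : Fin d, c i * f (n - ((i : ℕ) + 1))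

namespace LRSAux

variable {K : Type*} [Field K]

/-- shift of a sequence -/
def shift (f : ℕ → K) (k : ℕ) : ℕ → K := fun n => f (n + k)

/-- recurrence written "forwards" -/
def AnnRec (d : ℕ) (c : Fin d → K) (f : ℕ → K) : Prop :=
  ∀ m, f (m + d) = ∑ j : Fin d, c j * f (m + (j : ℕ))

def FinShifts (f : ℕ → K) : Prop :=
  ∃ W : Submodule K (ℕ → K), FiniteDimensional K W ∧ ∀ k, shift f k ∈ W

lemma key_reflect {d m : ℕ} (c : Fin d → K) (f : ℕ → K) :
    ∑ i : Fin d, c i * f (m + d - ((i : ℕ) + 1))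
      = ∑ j : Fin d, c (Fin.rev j) * f (m + (j : ℕ)) := by
  set G : ℕ → K := fun t => (if h : t < d then c ⟨t, h⟩ else 0) * f (m + d - (t + 1)) with hG
  have h1 : ∑ i : Fin d, c i * f (m + d - ((i : ℕ) + 1)) = ∑ i ∈ Finset.range d, G i := by
    rw [← Fin.sum_univ_eq_sum_range]
    exact Finset.sum_congr rfl fun i _ => by simp [hG, i.2]
  have h2 : ∑ j : Fin d, c (Fin.rev j) * f (m + (j : ℕ))
      = ∑ j ∈ Finset.range d, G (d - 1 - j) := by
    rw [← Fin.sum_univ_eq_sum_range (fun j => G (d - 1 - j)) d]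
    refine Finset.sum_congr rfl fun j _ => ?_
    have hj : (j : ℕ) < d := j.2
    have hlt : d - 1 - (j : ℕ) < d := by omega
    simp only [hG, dif_pos hlt]
    congr 1
    · congr 1
      ext
      simp only [Fin.val_rev]
      omega
    · congr 1
      omega
  rw [h1, h2, Finset.sum_range_reflect]

lemma isLRS_iff_annRec (f : ℕ → K) : IsLRS f ↔ ∃ d c, AnnRec d c f := by
  constructor
  · rintro ⟨d, c, h⟩
    refine ⟨d, fun j => c (Fin.rev j), fun m => ?_⟩
    rw [h (m + d) (by omega)]
    have : ∀ i : Fin d, m + d - ((i : ℕ) + 1) = m + d - ((i : ℕ) + 1) := fun _ => rfl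
    exact key_reflect c f
  · rintro ⟨d, c, h⟩
    refine ⟨d, fun i => c (Fin.rev i), fun n hn => ?_⟩
    obtain ⟨m, rfl⟩ := Nat.exists_eq_add_of_le' hn
    rw [h m, key_reflect (fun i => c (Fin.rev i)) f]
    simp [Fin.rev_rev]

lemma annRec_finShifts {d : ℕ} {c : Fin d → K} {f : ℕ → K} (h : AnnRec d c f) :
    FinShifts f := by
  refine ⟨Submodule.span K (Set.range fun j : Fin d => shift f (j : ℕ)),
    FiniteDimensional.span_of_finite K (Set.finite_range _), fun k => ?_⟩
  induction k using Nat.strong_induction_on with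
  | _ k ih =>
    rcases lt_or_ge k d with hk | hk
    · exact Submodule.subset_span ⟨⟨k, hk⟩, rfl⟩
    · rcases Nat.eq_zero_or_pos d with hd | hd
      · subst hd
        have h0 : ∀ m, f m = 0 := fun m => by simpa using h m
        have hf : shift f k = 0 := by funext n; simp [shift, h0]
        rw [hf]; exact Submodule.zero_mem _
      · have hrw : shift f k = ∑ j : Fin d, c j • shift f (k - d + (j : ℕ)) := by
          funext n
          have := h (n + (k - d))
          simp only [shift, Finset.sum_apply, Pi.smul_apply, smul_eq_mul]
          have e1 : n + (k - d) + d = n + k := by omega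
          rw [e1] at this
          rw [this]
          refine Finset.sum_congr rfl fun j _ => ?_
          congr 2
          omega
        rw [hrw]
        refine Submodule.sum_mem _ fun j _ => Submodule.smul_mem _ _ (ih _ ?_)
        have : (j : ℕ) < d := j.2
        omega

lemma finShifts_annRec {f : ℕ → K} (h : FinShifts f) : ∃ d c, AnnRec d c f := by
  obtain ⟨W, hW, hmem⟩ := h
  set U : ℕ → Submodule K (ℕ → K) :=
    fun k => Submodule.span K (Set.range fun j : Fin k => shift f (j : ℕ)) with hU
  have hUW : ∀ k, U k ≤ W := by
    intro k
    rw [hU]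
    exact Submodule.span_le.2 (by rintro _ ⟨j, rfl⟩; exact hmem _)
  have key : ∃ d, shift f d ∈ U d := by
    by_contra hc
    push_neg at hc
    have hmono : ∀ k, U k < U (k + 1) := by
      intro k
      constructor
      · rw [hU]
        refine Submodule.span_mono ?_
        rintro _ ⟨j, rfl⟩
        exact ⟨⟨j, by omega⟩, rfl⟩
      · intro hle
        exact hc k (hle (Submodule.subset_span ⟨⟨k, by omega⟩, rfl⟩))
    have hrank : ∀ k, k ≤ Module.finrank K (U k) := by
      intro k
      induction k with
      | zero => omega
      | succ k ih =>
        have : FiniteDimensional K (U (k + 1)) := by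
          rw [hU]; exact FiniteDimensional.span_of_finite K (Set.finite_range _)
        have := Submodule.finrank_lt_finrank_of_lt (hmono k)
        omega
    have h1 : Module.finrank K (U (Module.finrank K W + 1)) ≤ Module.finrank K W :=
      Submodule.finrank_mono (hUW _)
    have h2 := hrank (Module.finrank K W + 1)
    omega
  obtain ⟨d, hd⟩ := key
  rw [hU] at hd
  obtain ⟨c, hc⟩ := (Finsupp.mem_span_range_iff_exists_finsupp).1 hd
  refine ⟨d, fun j => c j, fun m => ?_⟩
  have := congrFun hc m
  simp only [Finsupp.sum_apply, Finsupp.sum, Finset.sum_apply, Pi.smul_apply,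
    smul_eq_mul, shift] at this
  rw [← this]
  rw [Finset.sum_subset (Finset.subset_univ c.support)]
  intro j _ hj
  simp [Finsupp.notMem_support_iff.1 hj]

/-- selection map: put `g` on residue class `r` mod `a` -/
noncomputable def place (a r : ℕ) : (ℕ → K) →ₗ[K] (ℕ → K) where
  toFun g := fun n => if n % a = r then g (n / a) else 0
  map_add' g h := by funext n; by_cases hn : n % a = r <;> simp [hn]
  map_smul' s g := by funext n; by_cases hn : n % a = r <;> simp [hn]

/-- dilation map -/
def dilate (a r : ℕ) : (ℕ → K) →ₗ[K] (ℕ → K) where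
  toFun g := fun n => g (a * n + r)
  map_add' g h := by funext n; simp
  map_smul' s g := by funext n; simp

end LRSAux

open LRSAux in
/-- For `a ≥ 1`, `f` is an LRS iff each arithmetic-progression
subsequence `n ↦ f (a n + r)` (`0 ≤ r ≤ a - 1`) is an LRS. -/
theorem isLRS_iff_arith_progressions
    (K : Type*) [Field K] (a : ℕ) (ha : 1 ≤ a) (f : ℕ → K) :
    IsLRS f ↔ ∀ r, r < a → IsLRS (fun n => f (a * n + r)) := by
  constructor
  · intro hf r hr
    obtain ⟨d, c, hann⟩ := (isLRS_iff_annRec f).1 hf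
    obtain ⟨W, hWfd, hWmem⟩ := annRec_finShifts hann
    rw [isLRS_iff_annRec]
    apply finShifts_annRec
    refine ⟨W.map (dilate a r), inferInstance, fun k => ?_⟩
    refine ⟨shift f (a * k), hWmem _, ?_⟩
    funext n
    simp only [dilate, LinearMap.coe_mk, AddHom.coe_mk, shift]
    congr 1
    ring
  · intro hg
    rw [isLRS_iff_annRec]
    apply finShifts_annRec
    -- pick finite-dimensional shift spaces for each residue class
    have hFS : ∀ r : Fin a, FinShifts (fun n => f (a * n + (r : ℕ))) := by
      intro r
      obtain ⟨d, c, hann⟩ := (isLRS_iff_annRec _).1 (hg r r.2)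
      exact annRec_finShifts hann
    choose W hWfd hWmem using hFS
    set Wsum : Submodule K (ℕ → K) := ⨆ r : Fin a, W r with hWsum
    have : ∀ r : Fin a, FiniteDimensional K (W r) := hWfd
    have hWsumfd : FiniteDimensional K Wsum := by
      rw [hWsum]; infer_instance
    set Wbig : Submodule K (ℕ → K) :=
      ⨆ r : Fin a, Wsum.map (place a (r : ℕ)) with hWbig
    have hWbigfd : FiniteDimensional K Wbig := by
      rw [hWbig]; infer_instance
    refine ⟨Wbig, hWbigfd, fun k => ?_⟩
    -- decompose the shift
    have hdecomp : shift f k =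
        ∑ r : Fin a, place a (r : ℕ) (fun m => f (a * m + ((r : ℕ) + k))) := by
      funext n
      simp only [Finset.sum_apply, place, LinearMap.coe_mk, AddHom.coe_mk, shift]
      rw [Finset.sum_eq_single (⟨n % a, Nat.mod_lt _ (by omega)⟩ : Fin a)]
      · simp only [if_pos rfl]
        congr 1
        have := Nat.div_add_mod n a
        omega
      · intro b _ hb
        rw [if_neg]
        intro hcon
        exact hb (by ext; simp [← hcon])
      · intro hcon
        exact absurd (Finset.mem_univ _) hcon
    rw [hdecomp]
    refine Submodule.sum_mem _ fun r _ => ?_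
    refine Submodule.mem_iSup_of_mem r ?_
    refine ⟨_, ?_, rfl⟩
    -- the sequence m ↦ f (a m + r + k) is a shift of a residue-class subsequence
    have hsplit : (fun m => f (a * m + ((r : ℕ) + k))) =
        shift (fun n => f (a * n + (((r : ℕ) + k) % a))) (((r : ℕ) + k) / a) := by
      funext m
      simp only [shift]
      congr 1
      have := Nat.div_add_mod ((r : ℕ) + k) a
      ring_nf
      omega
    rw [hsplit]
    have hrk : ((r : ℕ) + k) % a < a := Nat.mod_lt _ (by omega)
    exact Submodule.mem_iSup_of_mem ⟨((r : ℕ) + k) % a, hrk⟩ (hWmem _ _)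
end

section
/- Let K be a field of characteristic 0 with primitive q-th root of unity ω. For a formal power series F = Σ_{n≥1} f(n)xⁿ with multiplicative coefficient sequence f and a prime q, the series G(x) := Σ_{j=0}^{q−1} F(ω^j x) − q f(q) F(x^q) is supported on exponents divisible by q²; that is, its n-th coefficient vanishes unless q² ∣ n. -/
/-!
Averaging over the `q`-th roots of unity, `∑ⱼ F(ωʲx)` keeps exactly the coefficients
`q f(n)` with `q ∣ n`, so at `n = q m` the coefficient of `G` is `q (f(q m) - f(q) f(m))`.
If `q² ∤ n` then `q ∤ m`, and multiplicativity gives `f(q m) = f(q) f(m)`.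
-/

open scoped Classical

/-- Substitution `x ↦ x^m` in a formal power series (for `m ≥ 1`). -/
noncomputable def substPow {K : Type*} [Semiring K] (m : ℕ) (F : PowerSeries K) :
    PowerSeries K :=
  PowerSeries.mk fun n => if m ≠ 0 ∧ m ∣ n then PowerSeries.coeff (R := K) (n / m) F else 0

open Finset PowerSeries

theorem IsPrimitiveRoot.sum_range_pow_pow {R : Type*} [CommRing R] [IsDomain R] {ζ : R}
    {k : ℕ} (hζ : IsPrimitiveRoot ζ k) (N : ℕ) :
    ∑ j ∈ range k, (ζ ^ j) ^ N = if k ∣ N then (k : R) else 0 := by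
  simp_rw [← pow_mul, mul_comm _ N, pow_mul]
  split_ifs with hdvd
  · simp [(hζ.pow_eq_one_iff_dvd N).2 hdvd]
  · have hne : ζ ^ N - 1 ≠ 0 := sub_ne_zero.2 fun h => hdvd ((hζ.pow_eq_one_iff_dvd N).1 h)
    have hgeom : (∑ j ∈ range k, (ζ ^ N) ^ j) * (ζ ^ N - 1) = 0 := by
      rw [geom_sum_mul, ← pow_mul, mul_comm, pow_mul, hζ.pow_eq_one, one_pow, sub_self]
    exact (mul_eq_zero.1 hgeom).resolve_right hne

theorem coeff_sum_rescale_primitiveRoot {R : Type*} [CommRing R] [IsDomain R] {ζ : R}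
    {k : ℕ} (hζ : IsPrimitiveRoot ζ k) (F : R⟦X⟧) (N : ℕ) :
    coeff N (∑ j ∈ range k, rescale (ζ ^ j) F) = if k ∣ N then k * coeff N F else 0 := by
  simp_rw [map_sum, coeff_rescale, ← sum_mul, hζ.sum_range_pow_pow, ite_mul, zero_mul]

theorem coeff_substPow {R : Type*} [Semiring R] (m : ℕ) (F : R⟦X⟧) (N : ℕ) :
    coeff N (substPow m F) = if m ≠ 0 ∧ m ∣ N then coeff (N / m) F else 0 :=
  coeff_mk _ _

theorem coeff_G_eq_zero_of_not_sq_dvd_general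
    (K : Type*) [Field K] (q : ℕ) (hq : q.Prime) (ω : K)
    (hω : IsPrimitiveRoot ω q) (f : ℕ → K)
    (hmult : ∀ m n : ℕ, m ≠ 0 → n ≠ 0 → Nat.Coprime m n → f (m * n) = f m * f n) :
    ∀ N : ℕ, ¬ (q ^ 2 ∣ N) →
      PowerSeries.coeff (R := K) N
        ((∑ j ∈ Finset.range q,
            PowerSeries.rescale (ω ^ j) (PowerSeries.mk fun n => if n = 0 then 0 else f n)) -
          ((q : K) * f q) • substPow q (PowerSeries.mk fun n => if n = 0 then 0 else f n)) = 0 := by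
  intro N hN
  rw [map_sub, map_smul, coeff_sum_rescale_primitiveRoot hω, coeff_substPow, smul_eq_mul]
  by_cases hdvd : q ∣ N
  · obtain ⟨m, rfl⟩ := hdvd
    have hqm : ¬ q ∣ m := fun h => hN (pow_two q ▸ mul_dvd_mul_left q h)
    have hm : m ≠ 0 := by rintro rfl; exact hqm (dvd_zero q)
    have hfqm : f (q * m) = f q * f m := hmult q m hq.ne_zero hm (hq.coprime_iff_not_dvd.2 hqm)
    rw [if_pos (dvd_mul_right q m), if_pos ⟨hq.ne_zero, dvd_mul_right q m⟩,
      Nat.mul_div_cancel_left m hq.pos, coeff_mk, coeff_mk, if_neg (mul_ne_zero hq.ne_zero hm),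
      if_neg hm, hfqm]
    ring
  · simp [hdvd]

/-- For multiplicative `f`, a prime `q` and a primitive `q`-th root of
unity `ω`, the series `G(x) = Σ_{j=0}^{q-1} F(ω^j x) − q f(q) F(x^q)` is supported on
exponents divisible by `q²`. -/
theorem coeff_G_eq_zero_of_not_sq_dvd
    (K : Type*) [Field K] [CharZero K] (q : ℕ) (hq : q.Prime) (ω : K)
    (hω : IsPrimitiveRoot ω q) (f : ℕ → K)
    (hmult : ∀ m n : ℕ, m ≠ 0 → n ≠ 0 → Nat.Coprime m n → f (m * n) = f m * f n) :
    ∀ N : ℕ, ¬ (q ^ 2 ∣ N) →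
      PowerSeries.coeff (R := K) N
        ((∑ j ∈ Finset.range q,
            PowerSeries.rescale (ω ^ j) (PowerSeries.mk fun n => if n = 0 then 0 else f n)) -
          ((q : K) * f q) • substPow q (PowerSeries.mk fun n => if n = 0 then 0 else f n)) = 0 :=
  coeff_G_eq_zero_of_not_sq_dvd_general K q hq ω hω f hmult
end

section
/- Let K be a field, P ∈ K[x], and let L be the subfield of an algebraic closure of K generated over the prime field by all roots of P. Let k ≥ 2 and q ∈ ℕ with gcd(k, q) = 1 and such that the only q-th root of unity in L is 1. Let ω be a primitive q-th root of unity in the algebraic closure. Then for all i, n ≥ 0 and j ≥ 0 with q ∤ j, the polynomials P(x^{k^i}) and P(ω^j x^n) have no common root other than possibly 0. -/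
open Polynomial

/-- Let `L` be the subfield of an algebraic closure of `K` generated (over
the prime field) by the roots of `P`. If `gcd(k, q) = 1`, the only `q`-th root of unity
in `L` is `1`, and `ω` is a primitive `q`-th root of unity, then `P(x^{k^i})` and
`P(ω^j x^n)` (with `q ∤ j`) have no common root other than possibly `0`. -/
theorem no_common_root_of_twisted_polys
    (K : Type*) [Field K] [CharZero K] (P : Polynomial K) (k q : ℕ)
    (hk : 2 ≤ k) (hq1 : 1 ≤ q) (hcop : Nat.Coprime k q)
    (hL : ∀ ζ ∈ Subfield.closure
        {x : AlgebraicClosure K | (P.map (algebraMap K (AlgebraicClosure K))).IsRoot x},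
        ζ ^ q = 1 → ζ = 1)
    (ω : AlgebraicClosure K) (hω : IsPrimitiveRoot ω q) :
    ∀ (i n j : ℕ), ¬ q ∣ j → ∀ β : AlgebraicClosure K, β ≠ 0 →
      (P.map (algebraMap K (AlgebraicClosure K))).eval (β ^ (k ^ i)) = 0 →
      (P.map (algebraMap K (AlgebraicClosure K))).eval (ω ^ j * β ^ n) = 0 → False := by
  intro i n j hj β hβ h1 h2
  set L := Subfield.closure
      {x : AlgebraicClosure K | (P.map (algebraMap K (AlgebraicClosure K))).IsRoot x} with hLdef
  have hmem1 : β ^ (k ^ i) ∈ L := Subfield.subset_closure h1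
  have hmem2 : ω ^ j * β ^ n ∈ L := Subfield.subset_closure h2
  have hωq : ω ^ q = 1 := hω.pow_eq_one
  have hmem3 : β ^ (n * q) ∈ L := by
    have he : (ω ^ j * β ^ n) ^ q = β ^ (n * q) := by
      rw [mul_pow, ← pow_mul, ← pow_mul, mul_comm j q, pow_mul, hωq, one_pow, one_mul]
    exact he ▸ pow_mem hmem2 q
  set a := k ^ i with ha
  set b := n * q with hb
  set d := Nat.gcd a b with hd
  -- β ^ d ∈ L via Bézout
  have hmemd : β ^ d ∈ L := by
    have key : (β : AlgebraicClosure K) ^ (d : ℤ)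
        = (β ^ (a : ℤ)) ^ Nat.gcdA a b * (β ^ (b : ℤ)) ^ Nat.gcdB a b := by
      rw [← zpow_mul, ← zpow_mul, ← zpow_add₀ hβ, ← Nat.gcd_eq_gcd_ab]
    have : (β : AlgebraicClosure K) ^ (d : ℤ) ∈ L := by
      rw [key]
      exact mul_mem (L.zpow_mem (by rw [zpow_natCast]; exact hmem1) _)
        (L.zpow_mem (by rw [zpow_natCast]; exact hmem3) _)
    rwa [zpow_natCast] at this
  have hdn : d ∣ n := by
    have hda : d ∣ a := Nat.gcd_dvd_left a b
    have hcd : Nat.Coprime d q := Nat.Coprime.coprime_dvd_left hda (hcop.pow_left i)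
    exact hcd.dvd_of_dvd_mul_right (Nat.gcd_dvd_right a b)
  have hmemn : β ^ n ∈ L := by
    obtain ⟨c, hc⟩ := hdn
    rw [hc, pow_mul]
    exact pow_mem hmemd c
  have hmemω : ω ^ j ∈ L := by
    have : (ω ^ j * β ^ n) * (β ^ n)⁻¹ ∈ L := mul_mem hmem2 (inv_mem hmemn)
    rwa [mul_assoc, mul_inv_cancel₀ (pow_ne_zero n hβ), mul_one] at this
  have hω1 : ω ^ j = 1 := by
    refine hL _ hmemω ?_
    rw [← pow_mul, mul_comm j q, pow_mul, hωq, one_pow]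
  exact hj ((hω.pow_eq_one_iff_dvd j).mp hω1)
end

section
/- Let D be a division ring with commuting automorphisms σ_y, σ_z, and form the iterated skew polynomial ring D[y;σ_y][z;σ_z] where σ_z acts trivially on y and σ_y trivially on z (so yz = zy). Let f = Σ_{i=0}^n f_i z^i with f_i ∈ D[y;σ_y], and suppose f = b·g holds in D(z;σ_z)[y;σ_y] with a ∈ D[z;σ_z]\{0}, i.e., a·f = b·g with b ∈ D[z;σ_z][y;σ_y] and g ∈ D[y;σ_y]. Then f_0 ∈ D[y;σ_y]·g. -/
/-!
Let `n` be the least index with `aₙ ≠ 0`; by hypothesis `aₙ = d` for a unit `d ∈ D`.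
Compare the `zⁿ`-coefficients of `a * f = b * g`. On the left only `aₙ zⁿ · f₀` contributes,
giving `d · τⁿ(f₀)`; on the right `g` is constant in `z`, giving `bₙ · τⁿ(g)`. Hence
`τⁿ(f₀) = d⁻¹ bₙ · τⁿ(g)`, and since `τ` is bijective (because `σ_z` is),
`f₀ = τ⁻ⁿ(d⁻¹ bₙ) · g`.
-/

/-- An axiomatization of the skew polynomial ring `R[y; σ]`: the ring `A` is freely
spanned (additively) by the monomials `ι a * y ^ i`, and `y * ι a = ι (σ a) * y`. -/
structure SkewPolyStructure (R A : Type*) [Ring R] [Ring A]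
    (σ : R →+* R) (ι : R →+* A) (y : A) where
  coeff : A ≃+ (ℕ →₀ R)
  coeff_symm : ∀ c : ℕ →₀ R, coeff.symm c = c.sum fun i a => ι a * y ^ i
  twist : ∀ a : R, y * ι a = ι (σ a) * y

namespace SkewPolyStructure

variable {R A : Type*} [Ring R] [Ring A] {σ : R →+* R} {ι : R →+* A} {y : A}
  (s : SkewPolyStructure R A σ ι y)

lemma as_sum (x : A) : x = (s.coeff x).sum fun i c => ι c * y ^ i := by
  rw [← s.coeff_symm, AddEquiv.symm_apply_apply]

lemma coeff_iota_mul_pow (c : R) (i : ℕ) : s.coeff (ι c * y ^ i) = Finsupp.single i c := by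
  rw [← s.coeff.apply_symm_apply (Finsupp.single i c), s.coeff_symm,
    Finsupp.sum_single_index (by simp)]

lemma coeff_iota_mul (c : R) (x : A) (i : ℕ) : s.coeff (ι c * x) i = c * s.coeff x i := by
  conv_lhs => rw [s.as_sum x, Finsupp.mul_sum, map_finsuppSum, Finsupp.sum_apply]
  simp_rw [← mul_assoc, ← map_mul, s.coeff_iota_mul_pow]
  rw [Finsupp.sum_eq_single i (fun j _ hj => by simp [hj]) (by simp),
    Finsupp.single_eq_same]

include s in
lemma pow_mul_iota (k : ℕ) (c : R) : y ^ k * ι c = ι ((σ ^ k) c) * y ^ k := by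
  induction k generalizing c with
  | zero => simp
  | succ k ih => rw [pow_succ, mul_assoc, s.twist, ← mul_assoc, ih, mul_assoc, ← pow_succ,
      RingHom.coe_pow, RingHom.coe_pow, Function.iterate_succ_apply]

lemma coeff_pow_mul (k : ℕ) (x : A) :
    s.coeff (y ^ k * x) = ((s.coeff x).mapRange (σ ^ k) (map_zero _)).mapDomain (· + k) := by
  apply s.coeff.symm.injective
  rw [AddEquiv.symm_apply_apply, s.coeff_symm,
    Finsupp.sum_mapDomain_index (by simp) (by simp [add_mul]),
    Finsupp.sum_mapRange_index (by simp)]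
  conv_lhs => rw [s.as_sum x, Finsupp.mul_sum]
  refine Finsupp.sum_congr fun i _ => ?_
  rw [← mul_assoc, s.pow_mul_iota, mul_assoc, ← pow_add, add_comm k]

lemma coeff_pow_mul_add (k m : ℕ) (x : A) :
    s.coeff (y ^ k * x) (m + k) = (σ ^ k) (s.coeff x m) := by
  rw [s.coeff_pow_mul, Finsupp.mapDomain_apply (add_left_injective k), Finsupp.mapRange_apply]

lemma coeff_pow_mul_of_lt {k m : ℕ} (hm : m < k) (x : A) : s.coeff (y ^ k * x) m = 0 := by
  rw [s.coeff_pow_mul]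
  exact Finsupp.mapDomain_of_notMem_range _ _ fun ⟨i, hi⟩ => by simp at hi; omega

lemma coeff_mul_eq_sum (u v : A) (m : ℕ) :
    s.coeff (u * v) m = (s.coeff u).sum fun i c => s.coeff (ι c * y ^ i * v) m := by
  conv_lhs => rw [s.as_sum u, Finsupp.sum_mul, map_finsuppSum, Finsupp.sum_apply]

lemma coeff_mul_iota (x : A) (c : R) (m : ℕ) :
    s.coeff (x * ι c) m = s.coeff x m * (σ ^ m) c := by
  rw [s.coeff_mul_eq_sum]
  simp_rw [mul_assoc, s.pow_mul_iota, ← mul_assoc, ← map_mul, s.coeff_iota_mul_pow]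
  rw [Finsupp.sum_eq_single m (fun j _ hj => by simp [hj]) (by simp), Finsupp.single_eq_same]

lemma coeff_mul_of_forall_lt_eq_zero {u : A} {n : ℕ} (hu : ∀ i < n, s.coeff u i = 0) (v : A) :
    s.coeff (u * v) n = s.coeff u n * (σ ^ n) (s.coeff v 0) := by
  rw [s.coeff_mul_eq_sum, Finsupp.sum_eq_single n]
  · rw [mul_assoc, s.coeff_iota_mul, ← s.coeff_pow_mul_add n 0, zero_add]
  · intro i hi hin
    rcases lt_or_gt_of_ne hin with hlt | hgt
    · exact absurd (hu i hlt) hi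
    · rw [mul_assoc, s.coeff_iota_mul, s.coeff_pow_mul_of_lt hgt, mul_zero]
  · intro hn
    rw [map_zero, zero_mul, zero_mul, map_zero, Finsupp.zero_apply]

section Endomorphism

variable {φ : A →+* A} {ρ : R →+* R}

lemma coeff_map_iota (hφ : ∀ c, φ (ι c) = ι (ρ c)) (hy : φ y = y) (x : A) :
    s.coeff (φ x) = (s.coeff x).mapRange ρ (map_zero ρ) := by
  apply s.coeff.symm.injective
  rw [AddEquiv.symm_apply_apply, s.coeff_symm, Finsupp.sum_mapRange_index (by simp)]
  conv_lhs => rw [s.as_sum x, map_finsuppSum]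
  simp only [map_mul, map_pow, hφ, hy]

include s in
lemma bijective_of_map_iota (hφ : ∀ c, φ (ι c) = ι (ρ c)) (hy : φ y = y)
    (hρ : Function.Bijective ρ) : Function.Bijective φ := by
  refine ⟨fun x x' h => s.coeff.injective (Finsupp.ext fun i => hρ.1 ?_), fun x => ?_⟩
  · simpa [s.coeff_map_iota hφ hy] using congr(s.coeff $h i)
  · rw [← RingHom.mem_range, s.as_sum x]
    refine sum_mem fun i _ => mul_mem ?_ (pow_mem (RingHom.mem_range.mpr ⟨y, hy⟩) i)
    obtain ⟨c, hc⟩ := hρ.2 (s.coeff x i)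
    exact RingHom.mem_range.mpr ⟨ι c, by rw [hφ, hc]⟩

end Endomorphism

end SkewPolyStructure

theorem constant_z_coefficient_left_multiple_general
    (D B A : Type*) [DivisionRing D] [Ring B] [Ring A]
    (σy σz : D →+* D) (hσz : Function.Bijective σz)
    (ιB : D →+* B) (yB : B) (sB : SkewPolyStructure D B σy ιB yB)
    -- `τ` is the extension of `σ_z` to `B = D[y;σ_y]` acting trivially on `y`
    (τ : B →+* B) (hτ : ∀ d : D, τ (ιB d) = ιB (σz d)) (hτy : τ yB = yB)
    (ιA : B →+* A) (z : A) (sA : SkewPolyStructure B A τ ιA z)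
    (f a b : A) (g : B)
    (ha : a ≠ 0)
    -- `a ∈ D[z;σ_z]`: all of its `z`-coefficients lie in `D ⊆ B`
    (haD : ∀ i : ℕ, (sA.coeff a) i ∈ Set.range ιB)
    (hab : a * f = b * ιA g) :
    ∃ h : B, (sA.coeff f) 0 = h * g := by
  have ha_coeff : ∃ n, sA.coeff a n ≠ 0 := by
    by_contra! h
    exact ha (sA.coeff.injective (by ext i; simp [h]))
  classical
  let n := Nat.find ha_coeff
  obtain ⟨d, hd⟩ := haD n
  have hd0 : d ≠ 0 := by rintro rfl; exact Nat.find_spec ha_coeff (by rw [← hd, map_zero])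
  have hlow : ∀ i < n, sA.coeff a i = 0 := fun i hi => not_not.mp (Nat.find_min ha_coeff hi)
  have hcoeff : ιB d * (τ ^ n) (sA.coeff f 0) = sA.coeff b n * (τ ^ n) g := by
    rw [hd, ← sA.coeff_mul_of_forall_lt_eq_zero hlow, hab, sA.coeff_mul_iota]
  have hτn : Function.Bijective ⇑(τ ^ n) := by
    rw [RingHom.coe_pow]; exact (sB.bijective_of_map_iota hτ hτy hσz).iterate n
  obtain ⟨h, hh⟩ := hτn.2 (ιB d⁻¹ * sA.coeff b n)
  refine ⟨h, hτn.1 ?_⟩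
  rw [map_mul, hh, mul_assoc, ← hcoeff, ← mul_assoc, ← map_mul, inv_mul_cancel₀ hd0, map_one, one_mul]

/-- In the iterated skew polynomial ring `D[y;σ_y][z;σ_z]` (with `σ_y`,
`σ_z` commuting automorphisms of the division ring `D`, `σ_z` acting trivially on `y`),
if `a · f = b · g` with `0 ≠ a ∈ D[z;σ_z]`, `b ∈ D[z;σ_z][y;σ_y]` and `g ∈ D[y;σ_y]`,
then the constant `z`-coefficient `f₀` of `f` lies in the left ideal `D[y;σ_y] · g`. -/
theorem constant_z_coefficient_left_multiple
    (D B A : Type*) [DivisionRing D] [Ring B] [Ring A]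
    (σy σz : D →+* D) (hσy : Function.Bijective σy) (hσz : Function.Bijective σz)
    (hcomm : σy.comp σz = σz.comp σy)
    (ιB : D →+* B) (yB : B) (sB : SkewPolyStructure D B σy ιB yB)
    -- `τ` is the extension of `σ_z` to `B = D[y;σ_y]` acting trivially on `y`
    (τ : B →+* B) (hτ : ∀ d : D, τ (ιB d) = ιB (σz d)) (hτy : τ yB = yB)
    (ιA : B →+* A) (z : A) (sA : SkewPolyStructure B A τ ιA z)
    (f a b : A) (g : B)
    (ha : a ≠ 0)
    -- `a ∈ D[z;σ_z]`: all of its `z`-coefficients lie in `D ⊆ B`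
    (haD : ∀ i : ℕ, (sA.coeff a) i ∈ Set.range ιB)
    (hab : a * f = b * ιA g) :
    ∃ h : B, (sA.coeff f) 0 = h * g :=
  constant_z_coefficient_left_multiple_general D B A σy σz hσz ιB yB sB τ hτ hτy ιA z sA f a b g ha
    haD hab
end

section
/- Let D be a division ring and σ an automorphism of D. Inside the quotient division ring D(y;σ) of the skew polynomial ring D[y;σ], for any infinite set N ⊆ ℕ of positive integers, the intersection of the sub-division-rings D(yⁿ) (generated by D and yⁿ) over n ∈ N equals D. -/
/-!
Let `ord` be the trailing degree on `D[y;σ]`; it is additive on products since `σ` is injective.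
By the left Ore condition any two representations `b⁻¹a = q⁻¹p` of a fraction have a common left
multiple `ua = wp`, `ub = wq`, so `ord a - ord b` depends only on the fraction. For a fraction in
`D(yⁿ)` it is divisible by `n`, hence it vanishes on the intersection over the infinite set `N`.
Given `e = b⁻¹a` in the intersection with `ord a = ord b = m`, choose `λ` with
`σᵐ(λ) = b_m⁻¹ a_m`; then `e - λ = b⁻¹(a - bλ)` still lies in the intersection, while
`ord (a - bλ) > m = ord b`. So `a = bλ` and `e = λ ∈ D`.
-/

theorem Int.eq_zero_of_forall_dvd_of_infinite {N : Set ℕ} (hN : N.Infinite) {z : ℤ}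
    (h : ∀ n ∈ N, (n : ℤ) ∣ z) : z = 0 := by
  obtain ⟨n, hn, hlt⟩ := hN.exists_gt z.natAbs
  exact Int.eq_zero_of_dvd_of_natAbs_lt_natAbs (h n hn) (by simpa using hlt)

/-- Left Ore condition, read off from `j` being a left quotient of `A`. -/
theorem exists_mul_eq_mul_of_inv_mul_eq {A E : Type*} [Ring A] [DivisionRing E] {j : A →+* E}
    (hj : Function.Injective j) (hfrac : ∀ e : E, ∃ a b : A, b ≠ 0 ∧ e = (j b)⁻¹ * j a)
    {a b p q : A} (hb : b ≠ 0) (hq : q ≠ 0) (h : (j b)⁻¹ * j a = (j q)⁻¹ * j p) :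
    ∃ u w : A, u ≠ 0 ∧ w ≠ 0 ∧ u * b = w * q ∧ u * a = w * p := by
  have hjb : j b ≠ 0 := (map_ne_zero_iff j hj).2 hb
  have hjq : j q ≠ 0 := (map_ne_zero_iff j hj).2 hq
  obtain ⟨u, w, hw, hwu⟩ := hfrac (j q * (j b)⁻¹)
  have hjw : j w ≠ 0 := (map_ne_zero_iff j hj).2 hw
  have hub : j u * j b = j w * j q := by
    rw [← (eq_inv_mul_iff_mul_eq₀ hjw).1 hwu, mul_assoc, mul_assoc, inv_mul_cancel₀ hjb, mul_one]
  have hua : j u * j a = j w * j p :=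
    calc j u * j a = j u * j b * ((j b)⁻¹ * j a) := by rw [mul_assoc, mul_inv_cancel_left₀ hjb]
      _ = j w * j q * ((j q)⁻¹ * j p) := by rw [hub, h]
      _ = j w * j p := by rw [mul_assoc, mul_inv_cancel_left₀ hjq]
  refine ⟨u, w, ?_, hw, hj (by rw [map_mul, map_mul, hub]), hj (by rw [map_mul, map_mul, hua])⟩
  rintro rfl
  exact mul_ne_zero hjw hjq (by rw [← hub, map_zero, zero_mul])

namespace SkewPolyStructure

section Ring

variable {R A : Type*} [Ring R] [Ring A] {σ : R →+* R} {ι : R →+* A} {y : A}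
  (s : SkewPolyStructure R A σ ι y)

theorem sum_coeff (f : A) : ((s.coeff f).sum fun i a => ι a * y ^ i) = f := by
  rw [← s.coeff_symm, AddEquiv.symm_apply_apply]

theorem coeff_monomial (a : R) (m : ℕ) : s.coeff (ι a * y ^ m) = Finsupp.single m a := by
  rw [← s.coeff.apply_symm_apply (Finsupp.single m a), s.coeff_symm,
    Finsupp.sum_single_index (by simp)]

theorem coeff_base (a : R) : s.coeff (ι a) = Finsupp.single 0 a := by
  simpa using s.coeff_monomial a 0

include s in
theorem pow_mul_base (m : ℕ) (a : R) : y ^ m * ι a = ι (σ^[m] a) * y ^ m := by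
  induction m generalizing a with
  | zero => simp
  | succ m ih =>
    rw [pow_succ, mul_assoc, s.twist, ← mul_assoc, ih, mul_assoc, ← pow_succ,
      ← Function.iterate_succ_apply]

include s in
theorem monomial_mul_monomial (a b : R) (i k : ℕ) :
    ι a * y ^ i * (ι b * y ^ k) = ι (a * σ^[i] b) * y ^ (i + k) := by
  rw [mul_assoc, ← mul_assoc (y ^ i), s.pow_mul_base, mul_assoc, ← pow_add, ← mul_assoc,
    ← map_mul]

theorem coeff_mul (f g : A) :
    s.coeff (f * g) = (s.coeff f).sum fun i a => (s.coeff g).sum fun k b =>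
      Finsupp.single (i + k) (a * σ^[i] b) := by
  conv_lhs => rw [← s.sum_coeff f, ← s.sum_coeff g]
  rw [Finsupp.sum_mul]
  simp only [Finsupp.mul_sum, s.monomial_mul_monomial]
  simp only [Finsupp.sum, map_sum, s.coeff_monomial]

theorem coeff_mul_base (f : A) (a : R) (i : ℕ) :
    s.coeff (f * ι a) i = s.coeff f i * σ^[i] a := by
  simp +contextual [coeff_mul, coeff_base, Finsupp.sum_apply, Finsupp.single_apply]

/-- The order of vanishing at `y = 0`; junk value `0` at `f = 0`. -/
noncomputable def natTrailingDegree (f : A) : ℕ := sInf {i | s.coeff f i ≠ 0}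

theorem natTrailingDegree_le_of_ne_zero {f : A} {i : ℕ} (h : s.coeff f i ≠ 0) :
    s.natTrailingDegree f ≤ i :=
  Nat.sInf_le h

theorem coeff_eq_zero_of_lt_natTrailingDegree {f : A} {i : ℕ} (h : i < s.natTrailingDegree f) :
    s.coeff f i = 0 :=
  not_not.1 fun hi => (s.natTrailingDegree_le_of_ne_zero hi).not_gt h

theorem coeff_natTrailingDegree_ne_zero {f : A} (hf : f ≠ 0) :
    s.coeff f (s.natTrailingDegree f) ≠ 0 :=
  Nat.sInf_mem (Finsupp.ne_iff.1 ((map_ne_zero_iff s.coeff s.coeff.injective).2 hf))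

theorem coeff_mul_of_lt_natTrailingDegree_add {f g : A} {k : ℕ}
    (hk : k < s.natTrailingDegree f + s.natTrailingDegree g) : s.coeff (f * g) k = 0 := by
  rw [coeff_mul, Finsupp.sum_apply, Finsupp.sum]
  refine Finset.sum_eq_zero fun i hi => ?_
  rw [Finsupp.sum_apply, Finsupp.sum]
  refine Finset.sum_eq_zero fun l hl => Finsupp.single_eq_of_ne ?_
  have := s.natTrailingDegree_le_of_ne_zero (Finsupp.mem_support_iff.1 hi)
  have := s.natTrailingDegree_le_of_ne_zero (Finsupp.mem_support_iff.1 hl)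
  omega

theorem coeff_mul_natTrailingDegree_add (f g : A) :
    s.coeff (f * g) (s.natTrailingDegree f + s.natTrailingDegree g)
      = s.coeff f (s.natTrailingDegree f) *
        σ^[s.natTrailingDegree f] (s.coeff g (s.natTrailingDegree g)) := by
  rw [coeff_mul, Finsupp.sum_apply, Finsupp.sum_eq_single (s.natTrailingDegree f),
    Finsupp.sum_apply, Finsupp.sum_eq_single (s.natTrailingDegree g), Finsupp.single_eq_same]
  · intro k hk hne
    exact Finsupp.single_eq_of_ne (by have := s.natTrailingDegree_le_of_ne_zero hk; omega)
  · simp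
  · intro i hi hne
    have := s.natTrailingDegree_le_of_ne_zero hi
    rw [Finsupp.sum_apply, Finsupp.sum]
    refine Finset.sum_eq_zero fun k hk => Finsupp.single_eq_of_ne ?_
    have := s.natTrailingDegree_le_of_ne_zero (Finsupp.mem_support_iff.1 hk)
    omega
  · simp

/-- `f` lies in the subring `R[yⁿ]`. -/
def IsPolyInPow (n : ℕ) (f : A) : Prop := ∀ i, s.coeff f i ≠ 0 → n ∣ i

theorem isPolyInPow_base (n : ℕ) (a : R) : s.IsPolyInPow n (ι a) := by
  intro i hi
  rw [coeff_base] at hi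
  obtain ⟨rfl, -⟩ := Finsupp.single_apply_ne_zero.1 hi
  exact dvd_zero n

theorem IsPolyInPow.sub_mul_base {n : ℕ} {p q : A} (hp : s.IsPolyInPow n p)
    (hq : s.IsPolyInPow n q) (a : R) : s.IsPolyInPow n (p - q * ι a) := by
  intro i hi
  rw [map_sub, Finsupp.sub_apply, coeff_mul_base] at hi
  by_cases hpi : s.coeff p i = 0
  · exact hq i fun hqi => hi (by rw [hpi, hqi, zero_mul, sub_zero])
  · exact hp i hpi

theorem IsPolyInPow.dvd_natTrailingDegree {n : ℕ} {f : A} (h : s.IsPolyInPow n f) (hf : f ≠ 0) :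
    n ∣ s.natTrailingDegree f :=
  h _ (s.coeff_natTrailingDegree_ne_zero hf)

/-- The left fractions of polynomials in `yⁿ`, i.e. the subring `R(yⁿ)` of `E`. -/
def fracsInPow {E : Type*} [DivisionRing E] (j : A →+* E) (n : ℕ) : Set E :=
  {e | ∃ a b : A, b ≠ 0 ∧ s.IsPolyInPow n a ∧ s.IsPolyInPow n b ∧ e = (j b)⁻¹ * j a}

theorem base_mem_fracsInPow {E : Type*} [DivisionRing E] (j : A →+* E) (n : ℕ) (a : R) :
    j (ι a) ∈ s.fracsInPow j n := by
  have := j.domain_nontrivial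
  refine ⟨ι a, 1, one_ne_zero, s.isPolyInPow_base n a, ?_, by simp⟩
  simpa using s.isPolyInPow_base n 1

theorem sub_base_mem_fracsInPow {E : Type*} [DivisionRing E] {j : A →+* E}
    (hj : Function.Injective j) {n : ℕ} {e : E} (he : e ∈ s.fracsInPow j n) (a : R) :
    e - j (ι a) ∈ s.fracsInPow j n := by
  obtain ⟨p, q, hq, hp_n, hq_n, rfl⟩ := he
  refine ⟨p - q * ι a, q, hq, hp_n.sub_mul_base s hq_n a, hq_n, ?_⟩
  rw [map_sub, map_mul, mul_sub, inv_mul_cancel_left₀ ((map_ne_zero_iff j hj).2 hq)]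

end Ring

section NoZeroDivisors

variable {R A : Type*} [Ring R] [NoZeroDivisors R] [Ring A] {σ : R →+* R} {ι : R →+* A} {y : A}
  (s : SkewPolyStructure R A σ ι y)

theorem natTrailingDegree_mul (hσ : Function.Injective σ) {f g : A} (hf : f ≠ 0) (hg : g ≠ 0) :
    s.natTrailingDegree (f * g) = s.natTrailingDegree f + s.natTrailingDegree g := by
  have h : s.coeff (f * g) (s.natTrailingDegree f + s.natTrailingDegree g) ≠ 0 := by
    rw [coeff_mul_natTrailingDegree_add]
    exact mul_ne_zero (s.coeff_natTrailingDegree_ne_zero hf)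
      (((hσ.iterate _).ne_iff' (iterate_map_zero σ _)).2 (s.coeff_natTrailingDegree_ne_zero hg))
  have hfg : f * g ≠ 0 := by
    rintro hfg
    simp [hfg] at h
  exact le_antisymm (s.natTrailingDegree_le_of_ne_zero h) (not_lt.1 fun hlt =>
    s.coeff_natTrailingDegree_ne_zero hfg (s.coeff_mul_of_lt_natTrailingDegree_add hlt))

theorem natTrailingDegree_sub_eq_of_inv_mul_eq (hσ : Function.Injective σ) {E : Type*}
    [DivisionRing E] {j : A →+* E} (hj : Function.Injective j)
    (hfrac : ∀ e : E, ∃ a b : A, b ≠ 0 ∧ e = (j b)⁻¹ * j a) {a b p q : A}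
    (ha : a ≠ 0) (hb : b ≠ 0) (hp : p ≠ 0) (hq : q ≠ 0) (h : (j b)⁻¹ * j a = (j q)⁻¹ * j p) :
    (s.natTrailingDegree a : ℤ) - s.natTrailingDegree b =
      s.natTrailingDegree p - s.natTrailingDegree q := by
  obtain ⟨u, w, hu, hw, hub, hua⟩ := exists_mul_eq_mul_of_inv_mul_eq hj hfrac hb hq h
  have hb' := congrArg s.natTrailingDegree hub
  have ha' := congrArg s.natTrailingDegree hua
  rw [s.natTrailingDegree_mul hσ hu hb, s.natTrailingDegree_mul hσ hw hq] at hb'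
  rw [s.natTrailingDegree_mul hσ hu ha, s.natTrailingDegree_mul hσ hw hp] at ha'
  omega

theorem natTrailingDegree_eq_of_mem_iInter (hσ : Function.Injective σ) {E : Type*}
    [DivisionRing E] {j : A →+* E} (hj : Function.Injective j)
    (hfrac : ∀ e : E, ∃ a b : A, b ≠ 0 ∧ e = (j b)⁻¹ * j a) {N : Set ℕ} (hN : N.Infinite)
    {a b : A} (ha : a ≠ 0) (hb : b ≠ 0) (h : (j b)⁻¹ * j a ∈ ⋂ n ∈ N, s.fracsInPow j n) :
    s.natTrailingDegree a = s.natTrailingDegree b := by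
  suffices (s.natTrailingDegree a : ℤ) - s.natTrailingDegree b = 0 by omega
  refine Int.eq_zero_of_forall_dvd_of_infinite hN fun n hn => ?_
  obtain ⟨p, q, hq, hp_n, hq_n, hpq⟩ := Set.mem_iInter₂.1 h n hn
  have hp : p ≠ 0 := by
    rintro rfl
    rw [map_zero, mul_zero, mul_eq_zero, inv_eq_zero, map_eq_zero_iff j hj,
      map_eq_zero_iff j hj] at hpq
    exact hpq.elim hb ha
  rw [s.natTrailingDegree_sub_eq_of_inv_mul_eq hσ hj hfrac ha hb hp hq hpq]
  exact dvd_sub (Int.natCast_dvd_natCast.2 (hp_n.dvd_natTrailingDegree s hp))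
    (Int.natCast_dvd_natCast.2 (hq_n.dvd_natTrailingDegree s hq))

end NoZeroDivisors

section DivisionRing

variable {D A : Type*} [DivisionRing D] [Ring A] {σ : D →+* D} {ι : D →+* A} {y : A}
  (s : SkewPolyStructure D A σ ι y)

theorem exists_coeff_sub_mul_base_eq_zero (hσ : Function.Surjective σ) {a b : A} (hb : b ≠ 0)
    (hab : s.natTrailingDegree b ≤ s.natTrailingDegree a) :
    ∃ d : D, ∀ i ≤ s.natTrailingDegree b, s.coeff (a - b * ι d) i = 0 := by
  set m := s.natTrailingDegree b
  obtain ⟨d, hd⟩ := (hσ.iterate m) ((s.coeff b m)⁻¹ * s.coeff a m)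
  refine ⟨d, fun i hi => ?_⟩
  rw [map_sub, Finsupp.sub_apply, coeff_mul_base]
  rcases hi.lt_or_eq with hlt | rfl
  · rw [s.coeff_eq_zero_of_lt_natTrailingDegree (hlt.trans_le hab),
      s.coeff_eq_zero_of_lt_natTrailingDegree hlt, zero_mul, sub_zero]
  · rw [hd, mul_inv_cancel_left₀ (s.coeff_natTrailingDegree_ne_zero hb), sub_self]

theorem mem_range_of_mem_iInter (hσ : Function.Bijective σ) {E : Type*} [DivisionRing E]
    {j : A →+* E} (hj : Function.Injective j)
    (hfrac : ∀ e : E, ∃ a b : A, b ≠ 0 ∧ e = (j b)⁻¹ * j a) {N : Set ℕ} (hN : N.Infinite)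
    {e : E} (he : e ∈ ⋂ n ∈ N, s.fracsInPow j n) : e ∈ Set.range (j.comp ι) := by
  obtain ⟨n₀, hn₀⟩ := hN.nonempty
  obtain ⟨a, b, hb, -, -, rfl⟩ := Set.mem_iInter₂.1 he n₀ hn₀
  have hjb : j b ≠ 0 := (map_ne_zero_iff j hj).2 hb
  by_cases ha : a = 0
  · exact ⟨0, by simp [ha]⟩
  have hab := s.natTrailingDegree_eq_of_mem_iInter hσ.1 hj hfrac hN ha hb he
  obtain ⟨d, hd⟩ := s.exists_coeff_sub_mul_base_eq_zero hσ.2 hb hab.ge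
  refine ⟨d, ?_⟩
  by_contra hne
  have hr : a - b * ι d ≠ 0 := by
    refine fun hr => hne ?_
    rw [RingHom.comp_apply, sub_eq_zero.1 hr, map_mul, inv_mul_cancel_left₀ hjb]
  have hrep : (j b)⁻¹ * j a - j (ι d) = (j b)⁻¹ * j (a - b * ι d) := by
    rw [map_sub, map_mul, mul_sub, inv_mul_cancel_left₀ hjb]
  have hmem : (j b)⁻¹ * j (a - b * ι d) ∈ ⋂ n ∈ N, s.fracsInPow j n :=
    hrep ▸ Set.mem_iInter₂.2 fun n hn =>
      s.sub_base_mem_fracsInPow hj (Set.mem_iInter₂.1 he n hn) d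
  have hr_deg := s.natTrailingDegree_eq_of_mem_iInter hσ.1 hj hfrac hN hr hb hmem
  exact s.coeff_natTrailingDegree_ne_zero hr (hd _ hr_deg.le)

end DivisionRing

end SkewPolyStructure

theorem inter_sub_division_rings_eq_base_general
    (D A E : Type*) [DivisionRing D] [Ring A] [DivisionRing E]
    (σ : D →+* D) (hσ : Function.Bijective σ)
    (ι : D →+* A) (y : A) (s : SkewPolyStructure D A σ ι y)
    (j : A →+* E) (hj : Function.Injective j)
    -- `E` is the left quotient division ring of `A`: every element is a left fraction
    (hfrac : ∀ e : E, ∃ a b : A, b ≠ 0 ∧ e = (j b)⁻¹ * j a)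
    (N : Set ℕ) (hN : N.Infinite) :
    (⋂ n ∈ N, {e : E | ∃ a b : A, b ≠ 0 ∧
        (∀ i : ℕ, (s.coeff a) i ≠ 0 → n ∣ i) ∧
        (∀ i : ℕ, (s.coeff b) i ≠ 0 → n ∣ i) ∧
        e = (j b)⁻¹ * j a}) = Set.range (j.comp ι) := by
  change ⋂ n ∈ N, s.fracsInPow j n = _
  refine subset_antisymm (fun e he => s.mem_range_of_mem_iInter hσ hj hfrac hN he) ?_
  rintro _ ⟨d, rfl⟩
  exact Set.mem_iInter₂.2 fun n _ => s.base_mem_fracsInPow j n d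

/-- Inside the left quotient division ring `E = D(y;σ)` of `A = D[y;σ]`
(`σ` an automorphism of the division ring `D`), the intersection of the sub-division
rings `D(yⁿ)` (left fractions of polynomials in `yⁿ`) over an infinite set `N` of
positive integers equals `D`. -/
theorem inter_sub_division_rings_eq_base
    (D A E : Type*) [DivisionRing D] [Ring A] [DivisionRing E]
    (σ : D →+* D) (hσ : Function.Bijective σ)
    (ι : D →+* A) (y : A) (s : SkewPolyStructure D A σ ι y)
    (j : A →+* E) (hj : Function.Injective j)
    -- `E` is the left quotient division ring of `A`: every element is a left fraction
    (hfrac : ∀ e : E, ∃ a b : A, b ≠ 0 ∧ e = (j b)⁻¹ * j a)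
    (N : Set ℕ) (hN : N.Infinite) (hN1 : ∀ n ∈ N, 1 ≤ n) :
    (⋂ n ∈ N, {e : E | ∃ a b : A, b ≠ 0 ∧
        (∀ i : ℕ, (s.coeff a) i ≠ 0 → n ∣ i) ∧
        (∀ i : ℕ, (s.coeff b) i ≠ 0 → n ∣ i) ∧
        e = (j b)⁻¹ * j a}) = Set.range (j.comp ι) :=
  inter_sub_division_rings_eq_base_general D A E σ hσ ι y s j hj hfrac N hN
end

section
/- Let K be a field of characteristic 0 and k ≥ 2. Let F ∈ K⟦x⟧ satisfy F(x) = G(x^l) for some l ≥ 1 and G ∈ K⟦x⟧. Suppose Σ_{i=0}^n P_i(x) F(x^{k^i}) = A(x) with P₀,…,P_n, A ∈ K[x] and not all P_i zero. Then there exist Q₀,…,Q_n, B ∈ K[x] with Q₀ ≠ 0 such that Σ_{i=0}^n Q_i(x^l) F(x^{k^i}) = B(x^l). -/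
open Polynomial
open scoped Classical

/-- A polynomial regarded as a power series. -/
noncomputable def toPS {K : Type*} [Semiring K] (P : Polynomial K) : PowerSeries K :=
  PowerSeries.mk fun n => P.coeff n

/-!
Let `i₀` be the least index with `P i₀ ≠ 0` and `M = l k^{i₀}`. For `i ≥ i₀` we have
`F(x^{k^i}) = H(x^M)` with `H = G(x^{k^{i-i₀}})`, so the Cartier operator `Δ_r^{(M)}`, taken with
`r ≡ deg P_{i₀} (mod M)`, turns the equation into `Σ_j Δ_r(P_{i₀+j}) G(x^{k^j}) = Δ_r(A)`.
Here `Δ_r(P_{i₀}) ≠ 0` since it keeps the leading coefficient of `P_{i₀}`, and substituting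
`x ↦ x^l` turns `G(x^{k^j})` back into `F(x^{k^j})`.
-/

open Finset
open scoped PowerSeries

theorem Finset.sum_range_eq_sum_range_ite_add {β : Type*} [AddCommMonoid β] (f : ℕ → β)
    {n i₀ : ℕ} (hf : ∀ i < i₀, f i = 0) :
    ∑ i ∈ range n, f i = ∑ j ∈ range n, if j + i₀ < n then f (j + i₀) else 0 := by
  have hle : ∀ i, f i ≠ 0 → i₀ ≤ i := fun i hi => not_lt.1 fun h => hi (hf i h)
  refine sum_bij_ne_zero (fun i _ _ => i - i₀) ?_ ?_ ?_ ?_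
  · intro i hi _
    simp only [mem_range] at hi ⊢
    omega
  · intro i _ hi j _ hj h
    have := hle i hi
    have := hle j hj
    omega
  · intro j _ hne
    have hjn : j + i₀ < n := by by_contra h; simp [h] at hne
    exact ⟨j + i₀, mem_range.2 hjn, fun h => by simp [hjn, h] at hne, by omega⟩
  · intro i hi hne
    have := hle i hne
    simp only [mem_range] at hi
    rw [if_pos (by omega), Nat.sub_add_cancel this]

theorem toPS_eq_coe {R : Type*} [Semiring R] (p : R[X]) : toPS p = p := rfl

namespace PowerSeries

section Semiring

variable {R : Type*} [Semiring R]

noncomputable def cartier (M r : ℕ) : R⟦X⟧ →ₗ[R] R⟦X⟧ where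
  toFun φ := mk fun n => coeff (M * n + r) φ
  map_add' φ ψ := by ext; simp
  map_smul' a φ := by ext; simp

@[simp]
theorem coeff_cartier (M r n : ℕ) (φ : R⟦X⟧) :
    coeff n (cartier M r φ) = coeff (M * n + r) φ := by
  simp [cartier]

end Semiring

variable {R : Type*} [CommRing R]

theorem substPow_eq_expand {m : ℕ} (hm : m ≠ 0) (φ : R⟦X⟧) : substPow m φ = expand m hm φ := by
  ext n
  simp [substPow, coeff_expand, hm]

theorem expand_expand_eq_of_mul_eq {a b c d : ℕ} (ha : a ≠ 0) (hb : b ≠ 0) (hc : c ≠ 0)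
    (hd : d ≠ 0) (h : a * b = c * d) (φ : R⟦X⟧) :
    expand a ha (expand b hb φ) = expand c hc (expand d hd φ) := by
  rw [← expand_mul, ← expand_mul]
  congr 2

theorem cartier_mul_expand {M r : ℕ} (hr : r < M) (φ ψ : R⟦X⟧) :
    cartier M r (φ * expand M (Nat.ne_zero_of_lt hr) ψ) = cartier M r φ * ψ := by
  have hM : 0 < M := by omega
  ext n
  rw [coeff_cartier, mul_comm φ, coeff_mul, mul_comm _ ψ, coeff_mul,
    Nat.sum_antidiagonal_eq_sum_range_succ (fun a b => coeff a _ * coeff b _),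
    Nat.sum_antidiagonal_eq_sum_range_succ (fun a b => coeff a _ * coeff b _)]
  symm
  calc ∑ b ∈ range (n + 1), coeff b ψ * coeff (n - b) (cartier M r φ)
      = ∑ b ∈ range (n + 1), coeff (M * b) (expand M hM.ne' ψ) * coeff (M * n + r - M * b) φ := by
        refine sum_congr rfl fun b hb => ?_
        rw [coeff_expand_mul, coeff_cartier, Nat.mul_sub, Nat.sub_add_comm]
        exact Nat.mul_le_mul_left M (by simpa [Nat.lt_succ_iff] using hb)
    _ = ∑ j ∈ (range (n + 1)).image (M * ·),
          coeff j (expand M hM.ne' ψ) * coeff (M * n + r - j) φ := by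
        rw [sum_image fun a _ b _ h => Nat.eq_of_mul_eq_mul_left hM h]
    _ = ∑ j ∈ range (M * n + r + 1), coeff j (expand M hM.ne' ψ) * coeff (M * n + r - j) φ := by
        refine sum_subset (fun j => ?_) fun j hj hj' => ?_
        · simp only [mem_image, mem_range]
          rintro ⟨b, hb, rfl⟩
          have := Nat.mul_le_mul_left M (Nat.lt_succ_iff.1 hb)
          omega
        · have hndvd : ¬ M ∣ j := by
            rintro ⟨b, rfl⟩
            refine hj' (mem_image.2 ⟨b, mem_range.2 ?_, rfl⟩)
            by_contra h
            have := Nat.mul_le_mul_left M (not_lt.1 h)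
            simp only [mem_range] at hj
            rw [Nat.mul_succ] at this
            omega
          rw [coeff_expand_of_not_dvd _ _ _ hndvd, zero_mul]

end PowerSeries

namespace Polynomial

section Semiring

variable {R : Type*} [Semiring R]

noncomputable def cartier (M r : ℕ) (p : R[X]) : R[X] :=
  ∑ j ∈ range (p.natDegree + 1), monomial j (p.coeff (M * j + r))

theorem coeff_cartier {M : ℕ} (hM : M ≠ 0) (r n : ℕ) (p : R[X]) :
    (p.cartier M r).coeff n = p.coeff (M * n + r) := by
  simp only [cartier, finsetSum_coeff, coeff_monomial, sum_ite_eq', mem_range, ite_eq_left_iff,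
    not_lt]
  intro hn
  refine (coeff_eq_zero_of_natDegree_lt ?_).symm
  have := Nat.le_mul_of_pos_left n (Nat.pos_of_ne_zero hM)
  omega

theorem coe_cartier {M : ℕ} (hM : M ≠ 0) (r : ℕ) (p : R[X]) :
    (p.cartier M r : R⟦X⟧) = PowerSeries.cartier M r p := by
  ext n
  simp [coeff_cartier hM]

theorem cartier_natDegree_mod_ne_zero {M : ℕ} (hM : M ≠ 0) {p : R[X]} (hp : p ≠ 0) :
    p.cartier M (p.natDegree % M) ≠ 0 := by
  intro h
  have := coeff_cartier hM (p.natDegree % M) (p.natDegree / M) p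
  rw [h, Nat.div_add_mod, coeff_zero, eq_comm] at this
  exact hp (leadingCoeff_eq_zero.1 this)

end Semiring

theorem coe_comp_X_pow {R : Type*} [CommRing R] {l : ℕ} (hl : l ≠ 0) (p : R[X]) :
    (p.comp (X ^ l) : R⟦X⟧) = PowerSeries.expand l hl p := by
  ext n
  rw [← expand_eq_comp_X_pow, coeff_coe, coeff_expand (Nat.pos_of_ne_zero hl),
    PowerSeries.coeff_expand]
  split_ifs <;> simp

end Polynomial

theorem PowerSeries.cartier_sum_mul_expand_pow_expand {R : Type*} [CommRing R]
    {k l i₀ r n : ℕ} (hk : k ≠ 0) (hl : l ≠ 0) (hr : r < l * k ^ i₀)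
    (P : ℕ → R⟦X⟧) (hP : ∀ i < i₀, P i = 0) (G : R⟦X⟧) :
    cartier (l * k ^ i₀) r
        (∑ i ∈ range n, P i * expand (k ^ i) (pow_ne_zero i hk) (expand l hl G)) =
      ∑ j ∈ range n, (if j + i₀ < n then cartier (l * k ^ i₀) r (P (j + i₀)) else 0) *
        expand (k ^ j) (pow_ne_zero j hk) G := by
  rw [map_sum, sum_range_eq_sum_range_ite_add _ fun i hi => by rw [hP i hi, zero_mul, map_zero]]
  refine sum_congr rfl fun j _ => ?_
  split_ifs
  · rw [expand_expand_eq_of_mul_eq (c := l * k ^ i₀) (d := k ^ j) _ _ (Nat.ne_zero_of_lt hr) _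
      (by ring), cartier_mul_expand hr]
  · rw [zero_mul]

theorem mahler_equation_in_xl_general
    (K : Type*) [Field K] (k l : ℕ) (hk : 2 ≤ k) (hl : 1 ≤ l)
    (F G : PowerSeries K) (hFG : F = substPow l G)
    (n : ℕ) (P : ℕ → Polynomial K) (A : Polynomial K)
    (hP : ∃ i ≤ n, P i ≠ 0)
    (heq : ∑ i ∈ Finset.range (n + 1), toPS (P i) * substPow (k ^ i) F = toPS A) :
    ∃ (Q : ℕ → Polynomial K) (B : Polynomial K), Q 0 ≠ 0 ∧
      ∑ i ∈ Finset.range (n + 1), toPS ((Q i).comp (X ^ l)) * substPow (k ^ i) F =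
        toPS (B.comp (X ^ l)) := by
  have hk₀ : k ≠ 0 := by omega
  have hl₀ : l ≠ 0 := by omega
  obtain ⟨i₀, hi₀, hP₀, hPlow⟩ : ∃ i₀ ≤ n, P i₀ ≠ 0 ∧ ∀ i < i₀, P i = 0 := by
    obtain ⟨i, hi, hPi⟩ := hP
    have hex : ∃ i, P i ≠ 0 := ⟨i, hPi⟩
    exact ⟨Nat.find hex, (Nat.find_min' hex hPi).trans hi, Nat.find_spec hex,
      fun j hj => not_not.1 (Nat.find_min hex hj)⟩
  set M := l * k ^ i₀
  have hM : M ≠ 0 := mul_ne_zero hl₀ (pow_ne_zero _ hk₀)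
  set r := (P i₀).natDegree % M
  have hF : ∀ i, substPow (k ^ i) F =
      PowerSeries.expand (k ^ i) (pow_ne_zero i hk₀) (PowerSeries.expand l hl₀ G) := fun i => by
    rw [hFG, PowerSeries.substPow_eq_expand hl₀, PowerSeries.substPow_eq_expand]
  simp only [toPS_eq_coe, hF] at heq ⊢
  have hG := congrArg (PowerSeries.cartier M r) heq
  rw [PowerSeries.cartier_sum_mul_expand_pow_expand hk₀ hl₀ (Nat.mod_lt _ (Nat.pos_of_ne_zero hM))
    _ fun i hi => by rw [hPlow i hi, Polynomial.coe_zero], ← coe_cartier hM] at hG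
  let Q j := if j + i₀ < n + 1 then (P (j + i₀)).cartier M r else 0
  have hQ : ∀ j, (Q j : K⟦X⟧) =
      if j + i₀ < n + 1 then PowerSeries.cartier M r (P (j + i₀)) else 0 := fun j => by
    simp only [Q]
    split_ifs <;> simp [coe_cartier hM]
  refine ⟨Q, A.cartier M r, by simpa [Q, hi₀] using cartier_natDegree_mod_ne_zero hM hP₀, ?_⟩
  simp only [coe_comp_X_pow hl₀, ← hG, map_sum, map_mul, hQ]
  refine sum_congr rfl fun j _ => ?_
  rw [PowerSeries.expand_expand_eq_of_mul_eq _ _ hl₀ (pow_ne_zero j hk₀) (mul_comm _ _)]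

/-- If `F(x) = G(x^l)` satisfies an inhomogeneous Mahler-type equation
`Σ_{i=0}^n P_i(x) F(x^{k^i}) = A(x)` with not all `P_i` zero, then it satisfies one with
all coefficients being polynomials in `x^l` and nonzero lowest coefficient `Q₀(x^l)`. -/
theorem mahler_equation_in_xl
    (K : Type*) [Field K] [CharZero K] (k l : ℕ) (hk : 2 ≤ k) (hl : 1 ≤ l)
    (F G : PowerSeries K) (hFG : F = substPow l G)
    (n : ℕ) (P : ℕ → Polynomial K) (A : Polynomial K)
    (hP : ∃ i ≤ n, P i ≠ 0)
    (heq : ∑ i ∈ Finset.range (n + 1), toPS (P i) * substPow (k ^ i) F = toPS A) :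
    ∃ (Q : ℕ → Polynomial K) (B : Polynomial K), Q 0 ≠ 0 ∧
      ∑ i ∈ Finset.range (n + 1), toPS ((Q i).comp (X ^ l)) * substPow (k ^ i) F =
        toPS (B.comp (X ^ l)) :=
  mahler_equation_in_xl_general K k l hk hl F G hFG n P A hP heq
end

section
/- Let K be a field of characteristic 0, p a prime, r, r' ≥ 0 integers, and χ, χ' : ℕ → K eventually periodic functions with χ(n) = χ'(n) = 0 whenever p ∣ n. Suppose n^r χ(n) = n^{r'} χ'(n) for all n ≥ 1, and that this common value is nonzero for infinitely many n coprime to p. Then r = r' and χ = χ'. -/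
lemma per_ext {K : Type*} (χ : ℕ → K) (N d : ℕ)
    (h : ∀ n, N ≤ n → χ (n + d) = χ n) :
    ∀ k n, N ≤ n → χ (n + k * d) = χ n := by
  intro k
  induction k with
  | zero => simp
  | succ k ih =>
    intro n hn
    have e : n + (k + 1) * d = (n + k * d) + d := by ring
    rw [e, h _ (le_trans hn (Nat.le_add_right _ _)), ih n hn]

/-- If `χ, χ'` are eventually periodic, vanish on multiples of `p`,
`nʳ χ(n) = nʳ' χ'(n)` for all `n ≥ 1`, and this value is nonzero for infinitely many
`n` coprime to `p`, then `r = r'` and `χ = χ'`. -/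
theorem r_and_chi_uniquely_determined
    (K : Type*) [Field K] [CharZero K] (p : ℕ) (hp : p.Prime)
    (r r' : ℕ) (χ χ' : ℕ → K)
    (hχper : ∃ N d : ℕ, 1 ≤ N ∧ 1 ≤ d ∧ ∀ n, N ≤ n → χ (n + d) = χ n)
    (hχ'per : ∃ N d : ℕ, 1 ≤ N ∧ 1 ≤ d ∧ ∀ n, N ≤ n → χ' (n + d) = χ' n)
    (hχ0 : ∀ n : ℕ, p ∣ n → χ n = 0)
    (hχ'0 : ∀ n : ℕ, p ∣ n → χ' n = 0)
    (heq : ∀ n : ℕ, 1 ≤ n → (n : K) ^ r * χ n = (n : K) ^ r' * χ' n)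
    (hinf : {n : ℕ | ¬ p ∣ n ∧ (n : K) ^ r * χ n ≠ 0}.Infinite) :
    r = r' ∧ χ = χ' := by
  obtain ⟨N, d, hN, hd, hper⟩ := hχper
  obtain ⟨N', d', hN', hd', hper'⟩ := hχ'per
  -- pick a large n in the infinite set
  obtain ⟨n, hn_mem, hn_gt⟩ := hinf.exists_gt (max N N')
  obtain ⟨hnp, hnne⟩ := hn_mem
  have hnN : N ≤ n := le_of_lt (lt_of_le_of_lt (le_max_left _ _) hn_gt)
  have hnN' : N' ≤ n := le_of_lt (lt_of_le_of_lt (le_max_right _ _) hn_gt)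
  have hn1 : 1 ≤ n := le_trans hN hnN
  have hχn : χ n ≠ 0 := fun h => hnne (by rw [h, mul_zero])
  set D := d * d' with hD
  have hD1 : 1 ≤ D := Nat.one_le_iff_ne_zero.mpr (Nat.mul_ne_zero (by omega) (by omega))
  -- polynomial with infinitely many roots
  set P : Polynomial K := Polynomial.C (χ n) * Polynomial.X ^ r
      - Polynomial.C (χ' n) * Polynomial.X ^ r' with hP
  have hroot : ∀ k : ℕ, P.IsRoot ((n + k * D : ℕ) : K) := by
    intro k
    have h1 : 1 ≤ n + k * D := le_trans hn1 (Nat.le_add_right _ _)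
    have hχeq : χ (n + k * D) = χ n := by
      have : n + k * D = n + (k * d') * d := by rw [hD]; ring
      rw [this]; exact per_ext χ N d hper (k * d') n hnN
    have hχ'eq : χ' (n + k * D) = χ' n := by
      have : n + k * D = n + (k * d) * d' := by rw [hD]; ring
      rw [this]; exact per_ext χ' N' d' hper' (k * d) n hnN'
    have := heq (n + k * D) h1
    rw [hχeq, hχ'eq] at this
    simp only [Polynomial.IsRoot, hP, Polynomial.eval_sub, Polynomial.eval_mul,
      Polynomial.eval_C, Polynomial.eval_pow, Polynomial.eval_X]
    rw [mul_comm (χ n), mul_comm (χ' n), this, sub_self]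
  have hPzero : P = 0 := by
    apply Polynomial.eq_zero_of_infinite_isRoot
    refine Set.infinite_of_injective_forall_mem
      (f := fun k : ℕ => ((n + k * D : ℕ) : K)) ?_ ?_
    · intro a b hab
      have : n + a * D = n + b * D := Nat.cast_injective hab
      exact Nat.eq_of_mul_eq_mul_right hD1 (by omega)
    · intro k; exact hroot k
  have hrr : r = r' := by
    by_contra hne
    have := congrArg (fun q => Polynomial.coeff q r) hPzero
    simp only [hP, Polynomial.coeff_sub, Polynomial.coeff_C_mul,
      Polynomial.coeff_X_pow, Polynomial.coeff_zero] at this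
    rw [if_pos trivial, if_neg hne, mul_one, mul_zero, sub_zero] at this
    exact hχn this
  refine ⟨hrr, funext fun m => ?_⟩
  rcases Nat.eq_zero_or_pos m with hm | hm
  · rw [hm, hχ0 0 (dvd_zero p), hχ'0 0 (dvd_zero p)]
  · have h := heq m hm
    rw [hrr] at h
    have hmne : ((m : K)) ^ r' ≠ 0 := by
      apply pow_ne_zero
      exact Nat.cast_ne_zero.mpr (by omega)
    exact mul_left_cancel₀ hmne h
end
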